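/- For 0 < ε < 1 and β > 1, the PAS-Weibull average hazard h*(ε) = (M^{β-1}/(εη)^β)(1-(1-ε)^β) tends to +∞ as ε → 0⁺ (for fixed M > 0, η > 0). -/

import Mathlib

/-! Since `(1 - ε) ^ β ≤ 1 - ε` for `β ≥ 1`, we have `1 - (1 - ε) ^ β ≥ ε`; hence the average hazard dominates
`M ^ (β - 1) / η ^ β * ε ^ (1 - β)`, which blows up as `ε → 0⁺` because `1 - β < 0`. -/

open Filter Set Topology

lemma le_one_sub_one_sub_rpow {x β : ℝ} (hx₀ : 0 ≤ x) (hx₁ : x ≤ 1) (hβ : 1 ≤ β) :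
    x ≤ 1 - (1 - x) ^ β := by
  have := Real.rpow_le_self_of_le_one (sub_nonneg.2 hx₁) (by linarith) hβ
  linarith

lemma div_mul_rpow_mul_self {x η β : ℝ} (A : ℝ) (hx : 0 < x) (hη : 0 < η) :
    A / (x * η) ^ β * x = A / η ^ β * x ^ (1 - β) := by
  have hxβ : 0 < x ^ β := Real.rpow_pos_of_pos hx β
  have hηβ : 0 < η ^ β := Real.rpow_pos_of_pos hη β
  rw [Real.mul_rpow hx.le hη.le, Real.rpow_sub hx, Real.rpow_one]
  field_simp

theorem pas_weibull_bao_divergence (M η β : ℝ) (hM : 0 < M) (hη : 0 < η) (hβ : 1 < β) :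
    Filter.Tendsto (fun ε : ℝ => (M ^ (β - 1) / (ε * η) ^ β) * (1 - (1 - ε) ^ β))
      (nhdsWithin 0 (Set.Ioo 0 1)) Filter.atTop := by
  have hC : 0 < M ^ (β - 1) / η ^ β :=
    div_pos (Real.rpow_pos_of_pos hM _) (Real.rpow_pos_of_pos hη _)
  have h_lower : Tendsto (fun ε : ℝ => M ^ (β - 1) / η ^ β * ε ^ (1 - β))
      (𝓝[Ioo 0 1] 0) atTop :=
    ((tendsto_rpow_neg_nhdsGT_zero (by linarith)).mono_left
      (nhdsWithin_mono _ Ioo_subset_Ioi_self)).const_mul_atTop hC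
  refine tendsto_atTop_mono' _ ?_ h_lower
  filter_upwards [self_mem_nhdsWithin] with ε ⟨hε₀, hε₁⟩
  rw [← div_mul_rpow_mul_self _ hε₀ hη]
  have hA : 0 ≤ M ^ (β - 1) / (ε * η) ^ β := by positivity
  exact mul_le_mul_of_nonneg_left (le_one_sub_one_sub_rpow hε₀.le hε₁.le hβ.le) hA
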